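/- arXiv:1908.11182 — 2 statements merged into one kernel-verified Lean document; each statement's English description precedes it below -/
import Mathlib

section
/- Let A be a strictly positive operator on H and T ∈ B_A(H). Then (1/16)‖(TT^{♯A}+T^{♯A}T)² + 4(Re_A(T²))²‖_A ≤ w_A(T)⁴ ≤ (1/8)‖TT^{♯A}+T^{♯A}T‖_A² + (1/2)w_A(T²)². -/
noncomputable section
open Complex ContinuousLinearMap

variable {H : Type*} [NormedAddCommGroup H] [InnerProductSpace ℂ H] [CompleteSpace H]

/-- The `A`-inner product `⟨x,y⟩_A = ⟨Ax,y⟩`. -/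
def innA (A : H →L[ℂ] H) (x y : H) : ℂ := inner ℂ (A x) y

/-- The `A`-seminorm of a vector, `‖x‖_A = √⟨x,x⟩_A`. -/
def vnormA (A : H →L[ℂ] H) (x : H) : ℝ := Real.sqrt (innA A x x).re

/-- The `A`-numerical radius `w_A(T) = sup{|⟨Tx,x⟩_A| : ‖x‖_A = 1}`. -/
def wA (A T : H →L[ℂ] H) : ℝ :=
  sSup {r : ℝ | ∃ x : H, vnormA A x = 1 ∧ r = ‖innA A (T x) x‖}

/-- The `A`-operator seminorm, `sup` over `A`-unit vectors in the closure of the range of `A`. -/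
def opNormA (A T : H →L[ℂ] H) : ℝ :=
  sSup {r : ℝ | ∃ x : H, x ∈ closure (Set.range A) ∧ vnormA A x = 1 ∧ r = vnormA A (T x)}

/-- The `A`-operator seminorm, `sup` over all `A`-unit vectors (used when `A > 0`). -/
def opNormA' (A T : H →L[ℂ] H) : ℝ :=
  sSup {r : ℝ | ∃ x : H, vnormA A x = 1 ∧ r = vnormA A (T x)}

/-- The `A`-Crawford number `c_A(T) = inf{|⟨Tx,x⟩_A| : ‖x‖_A = 1}`. -/
def cA (A T : H →L[ℂ] H) : ℝ :=
  sInf {r : ℝ | ∃ x : H, vnormA A x = 1 ∧ r = ‖innA A (T x) x‖}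

/-- The `A`-minimum modulus `m_A(T) = inf{‖Tx‖_A : ‖x‖_A = 1}` (version for `A > 0`). -/
def mA (A T : H →L[ℂ] H) : ℝ :=
  sInf {r : ℝ | ∃ x : H, vnormA A x = 1 ∧ r = vnormA A (T x)}

/-- `S` is an `A`-adjoint of `T`, i.e. `A S = T* A`. -/
def IsAAdjoint (A T S : H →L[ℂ] H) : Prop :=
  A.comp S = (ContinuousLinearMap.adjoint T).comp A

/-- `A` is strictly positive: positive and `⟨Ax,x⟩ > 0` for all `x ≠ 0`. -/
def StrictPos (A : H →L[ℂ] H) : Prop :=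
  A.IsPositive ∧ ∀ x : H, x ≠ 0 → 0 < (innA A x x).re

/-- The inner product on `H ⊕ H`. -/
def inn2 (u v : H × H) : ℂ := inner ℂ u.1 v.1 + inner ℂ u.2 v.2

/-- `B = diag(A, A)` acting on `H ⊕ H`. -/
def Bop (A : H →L[ℂ] H) : H × H →L[ℂ] H × H := A.prodMap A

/-- The `B`-seminorm on `H ⊕ H`. -/
def vnormB (A : H →L[ℂ] H) (u : H × H) : ℝ := Real.sqrt (inn2 (Bop A u) u).re

/-- The `B`-numerical radius on `H ⊕ H`, where `B = diag(A, A)`. -/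
def wB (A : H →L[ℂ] H) (S : H × H →L[ℂ] H × H) : ℝ :=
  sSup {r : ℝ | ∃ u : H × H, vnormB A u = 1 ∧ r = ‖inn2 (Bop A (S u)) u‖}

/-- The `2 × 2` operator matrix `[[X, Y], [Z, W]]` acting on `H ⊕ H`. -/
def blk (X Y Z W : H →L[ℂ] H) : H × H →L[ℂ] H × H :=
  ((X.comp (ContinuousLinearMap.fst ℂ H H)) + (Y.comp (ContinuousLinearMap.snd ℂ H H))).prod
    ((Z.comp (ContinuousLinearMap.fst ℂ H H)) + (W.comp (ContinuousLinearMap.snd ℂ H H)))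

/-!
Put `R = √A`, so that `⟨x, y⟩_A = ⟪R x, R y⟫` and `‖x‖_A = ‖R x‖`. An operator `X` with an
`A`-adjoint `Y` is bounded for `‖·‖_A`: Cauchy–Schwarz gives `‖X x‖_A² ≤ ‖x‖_A ‖Y X x‖_A`, and
iterating this along the powers `D ^ 2 ^ n` of the `A`-selfadjoint `D = Y X` yields Reid's
inequality `‖D x‖_A ≤ ‖D‖ ‖x‖_A`. For `A`-selfadjoint `X`, polarization gives `‖X‖_A ≤ w_A(X)`.

With `S = T^♯A` and `|α| = 1`, the operator `G α = α T + ᾱ S` is `A`-selfadjoint with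
`⟨G α x, x⟩_A = 2 Re (ᾱ ⟨T x, x⟩_A)`, so `‖G α‖_A ≤ w_A(G α) ≤ 2 w_A(T)`.
Lower bound: `(TS + ST)² + (T² + S²)² = ((T + S)⁴ + (T - S)⁴) / 2`, where `T + S = G 1` and
`(T - S)⁴ = (G i)⁴`.
Upper bound: for an `A`-unit vector `x`, let `α` be the phase of `⟨T x, x⟩_A`. Then
`4 |⟨T x, x⟩_A|² ≤ ‖G α x‖_A² = Re ⟨(G α)² x, x⟩_A` and `(G α)² = (TS + ST) + (α² T² + ᾱ² S²)`,
whose last summand is the operator `G` built from `T²` and `α²`; hence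
`4 |⟨T x, x⟩_A|² ≤ ‖TS + ST‖_A + 2 w_A(T²)`, and `(a + b)² ≤ 2a² + 2b²` finishes.
-/

open scoped InnerProductSpace ComplexConjugate

section Seminorm

variable {E : Type*} [NormedAddCommGroup E] [InnerProductSpace ℂ E] {A X : E →L[ℂ] E} {c : ℝ}

lemma vnormA_nonneg (A : E →L[ℂ] E) (x : E) : 0 ≤ vnormA A x :=
  Real.sqrt_nonneg _

lemma opNormA'_nonneg (A X : E →L[ℂ] E) : 0 ≤ opNormA' A X :=
  Real.sSup_nonneg fun _ ⟨_, _, hr⟩ => hr ▸ vnormA_nonneg A _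

lemma wA_nonneg (A X : E →L[ℂ] E) : 0 ≤ wA A X :=
  Real.sSup_nonneg fun _ ⟨_, _, hr⟩ => hr ▸ norm_nonneg _

lemma opNormA'_le (hc : 0 ≤ c) (h : ∀ x, vnormA A x = 1 → vnormA A (X x) ≤ c) :
    opNormA' A X ≤ c :=
  Real.sSup_le (fun _ ⟨x, hx, hr⟩ => hr ▸ h x hx) hc

lemma wA_le (hc : 0 ≤ c) (h : ∀ x, vnormA A x = 1 → ‖innA A (X x) x‖ ≤ c) : wA A X ≤ c :=
  Real.sSup_le (fun _ ⟨x, hx, hr⟩ => hr ▸ h x hx) hc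

lemma wA_pow_le {n : ℕ} (hn : n ≠ 0) (hc : 0 ≤ c)
    (h : ∀ x, vnormA A x = 1 → ‖innA A (X x) x‖ ^ n ≤ c) : wA A X ^ n ≤ c := by
  have hn' : (0 : ℝ) < n := Nat.cast_pos.mpr (Nat.pos_of_ne_zero hn)
  have hroot : wA A X ≤ c ^ (n : ℝ)⁻¹ := wA_le (by positivity) fun x hx =>
    (Real.le_rpow_inv_iff_of_pos (norm_nonneg _) hc hn').mpr (by exact_mod_cast h x hx)
  calc wA A X ^ n ≤ (c ^ (n : ℝ)⁻¹) ^ n := pow_le_pow_left₀ (wA_nonneg A X) hroot n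
    _ = c := Real.rpow_inv_natCast_pow hc hn

end Seminorm

open Filter Topology in
lemma le_mul_of_sq_le_mul_succ {u : ℕ → ℝ} {t d C : ℝ} (hu : ∀ n, 0 ≤ u n) (ht : 0 < t)
    (hd : 0 ≤ d) (hrec : ∀ n, u n ^ 2 ≤ t * u (n + 1)) (hbound : ∀ n, u n ≤ C * d ^ 2 ^ n) :
    u 0 ≤ d * t := by
  have hiter : ∀ n, u 0 ^ 2 ^ n * t ≤ t ^ 2 ^ n * u n := by
    intro n
    induction n with
    | zero => simp [mul_comm]
    | succ n ih =>
      have hsq := pow_le_pow_left₀ (mul_nonneg (pow_nonneg (hu 0) _) ht.le) ih 2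
      refine le_of_mul_le_mul_right ?_ ht
      calc u 0 ^ 2 ^ (n + 1) * t * t = (u 0 ^ 2 ^ n * t) ^ 2 := by ring
        _ ≤ (t ^ 2 ^ n * u n) ^ 2 := hsq
        _ = t ^ 2 ^ (n + 1) * u n ^ 2 := by ring
        _ ≤ t ^ 2 ^ (n + 1) * (t * u (n + 1)) := by gcongr; exact hrec n
        _ = t ^ 2 ^ (n + 1) * u (n + 1) * t := by ring
  by_contra! hlt
  have hu0 : 0 < u 0 := (mul_nonneg hd ht.le).trans_lt hlt
  set q := d * t / u 0
  have hq : q < 1 := (div_lt_one hu0).mpr hlt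
  have hbelow : ∀ n, t ≤ C * q ^ 2 ^ n := by
    intro n
    rw [div_pow, mul_div_assoc', le_div_iff₀ (by positivity), mul_comm]
    calc u 0 ^ 2 ^ n * t ≤ t ^ 2 ^ n * u n := hiter n
      _ ≤ t ^ 2 ^ n * (C * d ^ 2 ^ n) := by gcongr; exact hbound n
      _ = C * (d * t) ^ 2 ^ n := by ring
  have hlim : Tendsto (fun n : ℕ => C * q ^ 2 ^ n) atTop (𝓝 (C * 0)) :=
    ((tendsto_pow_atTop_nhds_zero_of_lt_one (by positivity) hq).comp
      (tendsto_pow_atTop_atTop_of_one_lt (α := ℕ) one_lt_two)).const_mul C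
  have : t ≤ 0 := by simpa using ge_of_tendsto' hlim hbelow
  linarith

lemma sq_add_four_smul_sq {R : Type*} [Ring R] [Algebra ℂ R] (T S : R) :
    (T * S + S * T) ^ 2 + (4 : ℂ) • ((2 : ℂ)⁻¹ • (T ^ 2 + S ^ 2)) ^ 2
      = (2 : ℂ)⁻¹ • ((T + S) ^ 4 + (T - S) ^ 4) := by
  rw [smul_pow, smul_smul]
  have h : (T + S) ^ 4 + (T - S) ^ 4 = (2 : ℂ) • ((T * S + S * T) ^ 2 + (T ^ 2 + S ^ 2) ^ 2) := by
    rw [two_smul]; noncomm_ring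
  rw [h, smul_smul]
  norm_num

lemma smul_add_conj_smul_sq {R : Type*} [Ring R] [Algebra ℂ R] {α : ℂ} (hα : ‖α‖ = 1) (T S : R) :
    (α • T + conj α • S) ^ 2 = (T * S + S * T) + (α ^ 2 • T ^ 2 + conj (α ^ 2) • S ^ 2) := by
  have h1 : α * conj α = 1 := by
    rw [Complex.mul_conj, Complex.normSq_eq_norm_sq, hα]; norm_num
  simp only [sq, add_mul, mul_add, smul_mul_smul_comm, map_mul, h1, mul_comm (conj α) α, one_smul]
  abel

def IsABounded (A X : H →L[ℂ] H) : Prop :=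
  ∃ c : ℝ, ∀ x, vnormA A (X x) ≤ c * vnormA A x

section

variable {A S T X Y : H →L[ℂ] H}

lemma innA_eq_inner_sqrt (hA : 0 ≤ A) (x y : H) :
    innA A x y = ⟪CFC.sqrt A x, CFC.sqrt A y⟫_ℂ := by
  have hsq : A x = CFC.sqrt A (CFC.sqrt A x) :=
    congrArg (· x) (CFC.sqrt_mul_sqrt_self A hA).symm
  rw [innA, hsq]
  exact (IsSelfAdjoint.of_nonneg (CFC.sqrt_nonneg A)).isSymmetric _ _

lemma vnormA_eq_norm_sqrt (hA : 0 ≤ A) (x : H) : vnormA A x = ‖CFC.sqrt A x‖ := by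
  rw [vnormA, innA_eq_inner_sqrt hA, ← RCLike.re_eq_complex_re, inner_self_eq_norm_sq,
    Real.sqrt_sq (norm_nonneg _)]

lemma vnormA_sq (hA : 0 ≤ A) (x : H) : vnormA A x ^ 2 = (innA A x x).re := by
  rw [vnormA_eq_norm_sqrt hA, innA_eq_inner_sqrt hA, ← RCLike.re_eq_complex_re,
    inner_self_eq_norm_sq]

lemma norm_innA_le (hA : 0 ≤ A) (x y : H) : ‖innA A x y‖ ≤ vnormA A x * vnormA A y := by
  rw [innA_eq_inner_sqrt hA, vnormA_eq_norm_sqrt hA, vnormA_eq_norm_sqrt hA]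
  exact norm_inner_le_norm _ _

lemma vnormA_smul (hA : 0 ≤ A) (c : ℂ) (x : H) : vnormA A (c • x) = ‖c‖ * vnormA A x := by
  rw [vnormA_eq_norm_sqrt hA, vnormA_eq_norm_sqrt hA, map_smul, norm_smul]

lemma vnormA_add_le (hA : 0 ≤ A) (x y : H) : vnormA A (x + y) ≤ vnormA A x + vnormA A y := by
  simp only [vnormA_eq_norm_sqrt hA, map_add]
  exact norm_add_le _ _

lemma vnormA_add_sq_add_vnormA_sub_sq (hA : 0 ≤ A) (x y : H) :
    vnormA A (x + y) ^ 2 + vnormA A (x - y) ^ 2 = 2 * (vnormA A x ^ 2 + vnormA A y ^ 2) := by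
  simp only [vnormA_eq_norm_sqrt hA, map_add, map_sub]
  exact parallelogram_law_with_norm ℂ (CFC.sqrt A x) (CFC.sqrt A y)

lemma innA_conj (hA : IsSelfAdjoint A) (x y : H) : conj (innA A x y) = innA A y x := by
  rw [innA, innA, inner_conj_symm]
  exact (hA.isSymmetric y x).symm

lemma IsAAdjoint.innA_apply_left (hA : IsSelfAdjoint A) (h : IsAAdjoint A X Y) (x y : H) :
    innA A (X x) y = innA A x (Y y) := by
  have hy : A (Y y) = adjoint X (A y) := congrArg (· y) h
  calc ⟪A (X x), y⟫_ℂ = ⟪X x, A y⟫_ℂ := hA.isSymmetric (X x) y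
    _ = ⟪x, A (Y y)⟫_ℂ := by rw [hy, adjoint_inner_right]
    _ = ⟪A x, Y y⟫_ℂ := (hA.isSymmetric x (Y y)).symm

lemma isAAdjoint_iff_mul : IsAAdjoint A X Y ↔ A * Y = star X * A := by
  rw [IsAAdjoint, star_eq_adjoint]
  rfl

lemma IsAAdjoint.symm (hA : IsSelfAdjoint A) (h : IsAAdjoint A X Y) : IsAAdjoint A Y X := by
  rw [isAAdjoint_iff_mul] at h ⊢
  simpa only [star_mul, star_star, hA.star_eq] using (congrArg star h).symm

lemma IsAAdjoint.mul {X' Y' : H →L[ℂ] H} (h : IsAAdjoint A X Y) (h' : IsAAdjoint A X' Y') :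
    IsAAdjoint A (X * X') (Y' * Y) := by
  rw [isAAdjoint_iff_mul] at h h' ⊢
  rw [star_mul, ← mul_assoc, h', mul_assoc, h, mul_assoc]

lemma IsAAdjoint.add {X' Y' : H →L[ℂ] H} (h : IsAAdjoint A X Y) (h' : IsAAdjoint A X' Y') :
    IsAAdjoint A (X + X') (Y + Y') := by
  rw [isAAdjoint_iff_mul] at h h' ⊢
  rw [mul_add, h, h', star_add, add_mul]

lemma IsAAdjoint.smul (h : IsAAdjoint A X Y) (c : ℂ) : IsAAdjoint A (c • X) (conj c • Y) := by
  rw [isAAdjoint_iff_mul] at h ⊢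
  rw [mul_smul_comm, h, star_smul, smul_mul_assoc]
  rfl

lemma IsAAdjoint.pow (h : IsAAdjoint A X Y) (n : ℕ) : IsAAdjoint A (X ^ n) (Y ^ n) := by
  induction n with
  | zero => simp [isAAdjoint_iff_mul]
  | succ n ih => simpa only [← pow_succ, ← pow_succ'] using ih.mul h

lemma IsAAdjoint.vnormA_apply_sq (hA : 0 ≤ A) (h : IsAAdjoint A X Y) (x : H) :
    vnormA A (X x) ^ 2 = (innA A x (Y (X x))).re := by
  rw [vnormA_sq hA, h.innA_apply_left (IsSelfAdjoint.of_nonneg hA)]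

lemma IsAAdjoint.vnormA_apply_sq_le (hA : 0 ≤ A) (h : IsAAdjoint A X Y) (x : H) :
    vnormA A (X x) ^ 2 ≤ vnormA A x * vnormA A (Y (X x)) :=
  (h.vnormA_apply_sq hA x).trans_le ((Complex.re_le_norm _).trans (norm_innA_le hA _ _))

lemma vnormA_apply_le_of_isAAdjoint_self (hA : 0 ≤ A) {D : H →L[ℂ] H} (hD : IsAAdjoint A D D)
    (x : H) : vnormA A (D x) ≤ ‖D‖ * vnormA A x := by
  rcases (vnormA_nonneg A x).eq_or_lt with hx | hx
  · have := hD.vnormA_apply_sq_le hA x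
    rw [← hx, zero_mul] at this
    rw [← hx, mul_zero]
    nlinarith [vnormA_nonneg A (D x)]
  set u : ℕ → ℝ := fun n => vnormA A ((D ^ 2 ^ n) x)
  have hrec : ∀ n, u n ^ 2 ≤ vnormA A x * u (n + 1) := by
    intro n
    have hpow : (D ^ 2 ^ n) ((D ^ 2 ^ n) x) = (D ^ 2 ^ (n + 1)) x := by
      rw [← mul_apply_eq_comp, ← pow_add, ← two_mul, pow_succ']
    simpa only [u, hpow] using (hD.pow (2 ^ n)).vnormA_apply_sq_le hA x
  have hbound : ∀ n, u n ≤ ‖CFC.sqrt A‖ * ‖x‖ * ‖D‖ ^ 2 ^ n := by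
    intro n
    calc u n = ‖CFC.sqrt A ((D ^ 2 ^ n) x)‖ := vnormA_eq_norm_sqrt hA _
      _ ≤ ‖CFC.sqrt A‖ * (‖D ^ 2 ^ n‖ * ‖x‖) :=
        (le_opNorm _ _).trans (by gcongr; exact le_opNorm _ _)
      _ ≤ ‖CFC.sqrt A‖ * (‖D‖ ^ 2 ^ n * ‖x‖) := by gcongr; exact norm_pow_le' D (by positivity)
      _ = ‖CFC.sqrt A‖ * ‖x‖ * ‖D‖ ^ 2 ^ n := by ring
  simpa [u] using
    le_mul_of_sq_le_mul_succ (fun n => vnormA_nonneg A _) hx (norm_nonneg D) hrec hbound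

lemma IsAAdjoint.isABounded (hA : 0 ≤ A) (h : IsAAdjoint A X Y) : IsABounded A X := by
  refine ⟨√‖Y * X‖, fun x => ?_⟩
  have hYX : IsAAdjoint A (Y * X) (Y * X) := (h.symm (IsSelfAdjoint.of_nonneg hA)).mul h
  refine (pow_le_pow_iff_left₀ (vnormA_nonneg A _)
    (mul_nonneg (Real.sqrt_nonneg _) (vnormA_nonneg A x)) two_ne_zero).mp ?_
  calc vnormA A (X x) ^ 2 ≤ vnormA A x * vnormA A ((Y * X) x) := h.vnormA_apply_sq_le hA x
    _ ≤ vnormA A x * (‖Y * X‖ * vnormA A x) :=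
      mul_le_mul_of_nonneg_left (vnormA_apply_le_of_isAAdjoint_self hA hYX x) (vnormA_nonneg A x)
    _ = (√‖Y * X‖ * vnormA A x) ^ 2 := by rw [mul_pow, Real.sq_sqrt (norm_nonneg _)]; ring

lemma exists_vnormA_eq_one_smul (hA : 0 ≤ A) {x : H} (hx : 0 < vnormA A x) :
    ∃ y, vnormA A y = 1 ∧ x = (vnormA A x : ℂ) • y := by
  refine ⟨(vnormA A x : ℂ)⁻¹ • x, ?_, ?_⟩
  · rw [vnormA_smul hA, norm_inv, Complex.norm_real, Real.norm_of_nonneg hx.le,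
      inv_mul_cancel₀ hx.ne']
  · rw [smul_smul, mul_inv_cancel₀ (by exact_mod_cast hx.ne'), one_smul]

lemma IsABounded.vnormA_apply_le (hA : 0 ≤ A) (hX : IsABounded A X) (x : H) :
    vnormA A (X x) ≤ opNormA' A X * vnormA A x := by
  obtain ⟨c, hc⟩ := hX
  rcases (vnormA_nonneg A x).eq_or_lt with hx | hx
  · simpa [← hx] using hc x
  obtain ⟨y, hy, hxy⟩ := exists_vnormA_eq_one_smul hA hx
  have hbdd : BddAbove {r | ∃ x, vnormA A x = 1 ∧ r = vnormA A (X x)} :=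
    ⟨c, fun _ ⟨x, hx, hr⟩ => hr ▸ (hc x).trans_eq (by rw [hx, mul_one])⟩
  rw [hxy, map_smul, vnormA_smul hA, vnormA_smul hA, hy, mul_one, mul_comm]
  exact mul_le_mul_of_nonneg_right (le_csSup hbdd ⟨y, hy, rfl⟩) (norm_nonneg _)

lemma IsABounded.norm_innA_le_wA (hA : 0 ≤ A) (hX : IsABounded A X) (x : H) :
    ‖innA A (X x) x‖ ≤ wA A X * vnormA A x ^ 2 := by
  obtain ⟨c, hc⟩ := hX
  have hbdd : BddAbove {r | ∃ x, vnormA A x = 1 ∧ r = ‖innA A (X x) x‖} := by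
    refine ⟨c, fun _ ⟨x, hx, hr⟩ => hr ▸ ?_⟩
    calc ‖innA A (X x) x‖ ≤ vnormA A (X x) * vnormA A x := norm_innA_le hA _ _
      _ ≤ c * vnormA A x * vnormA A x := mul_le_mul_of_nonneg_right (hc x) (vnormA_nonneg A x)
      _ = c := by rw [hx, mul_one, mul_one]
  rcases (vnormA_nonneg A x).eq_or_lt with hx | hx
  · have := norm_innA_le hA (X x) x
    rw [← hx, mul_zero] at this
    rw [← hx]
    simpa using this
  obtain ⟨y, hy, hxy⟩ := exists_vnormA_eq_one_smul hA hx
  rw [hxy, vnormA_smul hA, hy, mul_one, Complex.norm_real, Real.norm_of_nonneg hx.le]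
  simp only [innA, map_smul, inner_smul_left, inner_smul_right, norm_mul, Complex.norm_conj,
    Complex.norm_real, Real.norm_of_nonneg hx.le]
  calc vnormA A x * (vnormA A x * ‖innA A (X y) y‖) = ‖innA A (X y) y‖ * vnormA A x ^ 2 := by
        ring
    _ ≤ wA A X * vnormA A x ^ 2 :=
        mul_le_mul_of_nonneg_right (le_csSup hbdd ⟨y, hy, rfl⟩) (sq_nonneg _)

lemma IsABounded.vnormA_pow_apply_le (hA : 0 ≤ A) (hX : IsABounded A X) (n : ℕ) (x : H) :
    vnormA A ((X ^ n) x) ≤ opNormA' A X ^ n * vnormA A x := by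
  induction n with
  | zero => simp
  | succ n ih =>
    calc vnormA A ((X ^ (n + 1)) x) = vnormA A (X ((X ^ n) x)) := by
          rw [pow_succ', mul_apply_eq_comp]
      _ ≤ opNormA' A X * vnormA A ((X ^ n) x) := hX.vnormA_apply_le hA _
      _ ≤ opNormA' A X * (opNormA' A X ^ n * vnormA A x) :=
        mul_le_mul_of_nonneg_left ih (opNormA'_nonneg A X)
      _ = opNormA' A X ^ (n + 1) * vnormA A x := by ring

lemma IsAAdjoint.four_mul_re_innA_le (hA : 0 ≤ A) (hX : IsAAdjoint A X X) (x y : H) :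
    4 * (innA A (X x) y).re ≤ 2 * wA A X * (vnormA A x ^ 2 + vnormA A y ^ 2) := by
  have hXb := hX.isABounded hA
  have hsym : innA A (X y) x = conj (innA A (X x) y) := by
    rw [hX.innA_apply_left (IsSelfAdjoint.of_nonneg hA), innA_conj (IsSelfAdjoint.of_nonneg hA)]
  have hpolar : (innA A (X (x + y)) (x + y)).re - (innA A (X (x - y)) (x - y)).re
      = 4 * (innA A (X x) y).re := by
    have : innA A (X (x + y)) (x + y) - innA A (X (x - y)) (x - y)
        = 2 * (innA A (X x) y + innA A (X y) x) := by
      simp only [innA, map_add, map_sub, inner_add_left, inner_add_right, inner_sub_left,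
        inner_sub_right]
      ring
    rw [← Complex.sub_re, this, hsym, Complex.add_conj, ← Complex.ofReal_ofNat,
      ← Complex.ofReal_mul, Complex.ofReal_re]
    ring
  calc 4 * (innA A (X x) y).re
      = (innA A (X (x + y)) (x + y)).re - (innA A (X (x - y)) (x - y)).re := hpolar.symm
    _ ≤ ‖innA A (X (x + y)) (x + y)‖ + ‖innA A (X (x - y)) (x - y)‖ := by
      linarith [Complex.re_le_norm (innA A (X (x + y)) (x + y)),
        Complex.abs_re_le_norm (innA A (X (x - y)) (x - y)),
        neg_abs_le (innA A (X (x - y)) (x - y)).re]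
    _ ≤ wA A X * vnormA A (x + y) ^ 2 + wA A X * vnormA A (x - y) ^ 2 :=
      add_le_add (hXb.norm_innA_le_wA hA _) (hXb.norm_innA_le_wA hA _)
    _ = 2 * wA A X * (vnormA A x ^ 2 + vnormA A y ^ 2) := by
      rw [← mul_add, vnormA_add_sq_add_vnormA_sub_sq hA]; ring

lemma IsAAdjoint.opNormA'_le_wA (hA : 0 ≤ A) (hX : IsAAdjoint A X X) : opNormA' A X ≤ wA A X := by
  refine opNormA'_le (wA_nonneg A X) fun x hx => ?_
  rcases (vnormA_nonneg A (X x)).eq_or_lt with hXx | hXx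
  · exact hXx ▸ wA_nonneg A X
  obtain ⟨y, hy, hxy⟩ := exists_vnormA_eq_one_smul hA hXx
  have hre : (innA A (X x) y).re = vnormA A (X x) := by
    conv_lhs => rw [hxy]
    rw [innA, map_smul, inner_smul_left, Complex.conj_ofReal, ← innA, Complex.re_ofReal_mul,
      ← vnormA_sq hA, hy, one_pow, mul_one]
  have := hX.four_mul_re_innA_le hA x y
  rw [hre, hx, hy] at this
  linarith

lemma IsAAdjoint.isAAdjoint_smul_add_conj_smul (hA : IsSelfAdjoint A) (h : IsAAdjoint A T S)
    (α : ℂ) : IsAAdjoint A (α • T + conj α • S) (α • T + conj α • S) := by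
  simpa only [Complex.conj_conj, add_comm (conj α • S)] using
    (h.smul α).add ((h.symm hA).smul (conj α))

lemma IsAAdjoint.innA_smul_add_conj_smul_apply (hA : IsSelfAdjoint A) (h : IsAAdjoint A T S)
    (α : ℂ) (x : H) :
    innA A ((α • T + conj α • S) x) x = ((2 * (conj α * innA A (T x) x).re : ℝ) : ℂ) := by
  have hS : innA A (S x) x = conj (innA A (T x) x) := by
    rw [(h.symm hA).innA_apply_left hA, innA_conj hA]
  have hsmul : ∀ (c : ℂ) (y : H), innA A (c • y) x = conj c * innA A y x := fun c y => by
    rw [innA, map_smul, inner_smul_left, innA]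
  rw [add_apply, smul_apply, smul_apply, innA, map_add, inner_add_left, ← innA, ← innA, hsmul,
    hsmul, hS, Complex.conj_conj, ← Complex.conj_conj α, ← map_mul, Complex.conj_conj,
    Complex.add_conj]

lemma IsAAdjoint.norm_innA_smul_add_conj_smul_apply_le (hA : 0 ≤ A) (h : IsAAdjoint A T S)
    (α : ℂ) (x : H) :
    ‖innA A ((α • T + conj α • S) x) x‖ ≤ 2 * ‖α‖ * (wA A T * vnormA A x ^ 2) := by
  rw [h.innA_smul_add_conj_smul_apply (IsSelfAdjoint.of_nonneg hA), Complex.norm_real,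
    Real.norm_eq_abs, abs_mul, abs_two, mul_assoc]
  gcongr
  calc |(conj α * innA A (T x) x).re| ≤ ‖conj α * innA A (T x) x‖ := Complex.abs_re_le_norm _
    _ = ‖α‖ * ‖innA A (T x) x‖ := by rw [norm_mul, Complex.norm_conj]
    _ ≤ ‖α‖ * (wA A T * vnormA A x ^ 2) := by
      gcongr
      exact (h.isABounded hA).norm_innA_le_wA hA x

lemma IsAAdjoint.wA_smul_add_conj_smul_le (hA : 0 ≤ A) (h : IsAAdjoint A T S) (α : ℂ) :
    wA A (α • T + conj α • S) ≤ 2 * ‖α‖ * wA A T :=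
  wA_le (mul_nonneg (by positivity) (wA_nonneg A T)) fun x hx =>
    (h.norm_innA_smul_add_conj_smul_apply_le hA α x).trans_eq (by rw [hx, one_pow, mul_one])

lemma IsAAdjoint.opNormA'_sq_add_four_smul_sq_le (hA : 0 ≤ A) (h : IsAAdjoint A T S) :
    1 / 16 * opNormA' A ((T * S + S * T) ^ 2 + (4 : ℂ) • ((2 : ℂ)⁻¹ • (T ^ 2 + S ^ 2)) ^ 2)
      ≤ wA A T ^ 4 := by
  have hpow : ∀ α : ℂ, ‖α‖ = 1 → ∀ x, vnormA A (((α • T + conj α • S) ^ 4) x)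
      ≤ (2 * wA A T) ^ 4 * vnormA A x := fun α hα x => by
    have hG := h.isAAdjoint_smul_add_conj_smul (IsSelfAdjoint.of_nonneg hA) α
    calc vnormA A (((α • T + conj α • S) ^ 4) x)
        ≤ opNormA' A (α • T + conj α • S) ^ 4 * vnormA A x :=
          (hG.isABounded hA).vnormA_pow_apply_le hA 4 x
      _ ≤ (2 * wA A T) ^ 4 * vnormA A x := by
        gcongr
        · exact vnormA_nonneg A x
        · exact opNormA'_nonneg A _
        · simpa only [hα, mul_one] using
            (hG.opNormA'_le_wA hA).trans (h.wA_smul_add_conj_smul_le hA α)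
  have hplus : T + S = (1 : ℂ) • T + conj (1 : ℂ) • S := by simp
  have hminus : (T - S) ^ 4 = (Complex.I • T + conj Complex.I • S) ^ 4 := by
    rw [Complex.conj_I, neg_smul, ← sub_eq_add_neg, ← smul_sub, smul_pow, Complex.I_pow_four,
      one_smul]
  rw [sq_add_four_smul_sq, hplus, hminus]
  refine (mul_le_mul_of_nonneg_left (opNormA'_le (c := 16 * wA A T ^ 4)
    (mul_nonneg (by norm_num) (pow_nonneg (wA_nonneg A T) 4)) fun x hx => ?_)
    (by norm_num)).trans_eq (by ring)
  rw [smul_apply, vnormA_smul hA, add_apply]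
  have hsum := (vnormA_add_le hA _ _).trans
    (add_le_add (hpow 1 norm_one x) (hpow Complex.I Complex.norm_I x))
  calc _ ≤ ‖(2 : ℂ)⁻¹‖ * ((2 * wA A T) ^ 4 * vnormA A x + (2 * wA A T) ^ 4 * vnormA A x) :=
        mul_le_mul_of_nonneg_left hsum (norm_nonneg _)
    _ = 16 * wA A T ^ 4 := by
      rw [hx, norm_inv, Complex.norm_two]
      ring

lemma IsAAdjoint.four_mul_norm_innA_sq_le (hA : 0 ≤ A) (h : IsAAdjoint A T S) {x : H}
    (hx : vnormA A x = 1) :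
    4 * ‖innA A (T x) x‖ ^ 2 ≤ opNormA' A (T * S + S * T) + 2 * wA A (T ^ 2) := by
  have hA' := IsSelfAdjoint.of_nonneg hA
  set z := innA A (T x) x
  set α := Complex.exp (z.arg * Complex.I)
  have hα : ‖α‖ = 1 := Complex.norm_exp_ofReal_mul_I _
  have hαz : conj α * z = ‖z‖ := by
    conv_lhs => rw [← Complex.norm_mul_exp_arg_mul_I z]
    rw [mul_left_comm, Complex.conj_mul', hα, Complex.ofReal_one, one_pow, mul_one]
  set G := α • T + conj α • S
  have hGx : 2 * ‖z‖ ≤ vnormA A (G x) := by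
    have := norm_innA_le hA (G x) x
    rwa [h.innA_smul_add_conj_smul_apply hA', hαz, Complex.ofReal_re, hx, mul_one,
      Complex.norm_real, Real.norm_of_nonneg (by positivity)] at this
  have hK : IsAAdjoint A (T * S + S * T) (T * S + S * T) :=
    (h.mul (h.symm hA')).add ((h.symm hA').mul h)
  have hK_le : (innA A x ((T * S + S * T) x)).re ≤ opNormA' A (T * S + S * T) := by
    calc _ ≤ vnormA A x * vnormA A ((T * S + S * T) x) :=
          (Complex.re_le_norm _).trans (norm_innA_le hA _ _)
      _ ≤ vnormA A x * (opNormA' A (T * S + S * T) * vnormA A x) :=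
          mul_le_mul_of_nonneg_left ((hK.isABounded hA).vnormA_apply_le hA x) (vnormA_nonneg A x)
      _ = opNormA' A (T * S + S * T) := by rw [hx, one_mul, mul_one]
  have hT2_le : (innA A x ((α ^ 2 • T ^ 2 + conj (α ^ 2) • S ^ 2) x)).re ≤ 2 * wA A (T ^ 2) := by
    rw [← innA_conj hA', Complex.conj_re]
    calc _ ≤ ‖innA A ((α ^ 2 • T ^ 2 + conj (α ^ 2) • S ^ 2) x) x‖ := Complex.re_le_norm _
      _ ≤ 2 * ‖α ^ 2‖ * (wA A (T ^ 2) * vnormA A x ^ 2) :=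
          (h.pow 2).norm_innA_smul_add_conj_smul_apply_le hA _ x
      _ = 2 * wA A (T ^ 2) := by rw [norm_pow, hα, hx]; ring
  calc 4 * ‖z‖ ^ 2 = (2 * ‖z‖) ^ 2 := by ring
    _ ≤ vnormA A (G x) ^ 2 := pow_le_pow_left₀ (by positivity) hGx 2
    _ = (innA A x (G (G x))).re := (h.isAAdjoint_smul_add_conj_smul hA' α).vnormA_apply_sq hA x
    _ = (innA A x ((T * S + S * T) x)).re
        + (innA A x ((α ^ 2 • T ^ 2 + conj (α ^ 2) • S ^ 2) x)).re := by
      rw [← mul_apply_eq_comp, ← sq, smul_add_conj_smul_sq hα, add_apply, innA,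
        inner_add_right, Complex.add_re]
      rfl
    _ ≤ _ := add_le_add hK_le hT2_le

lemma IsAAdjoint.norm_innA_pow_four_le (hA : 0 ≤ A) (h : IsAAdjoint A T S) {x : H}
    (hx : vnormA A x = 1) :
    ‖innA A (T x) x‖ ^ 4
      ≤ 1 / 8 * opNormA' A (T * S + S * T) ^ 2 + 1 / 2 * wA A (T ^ 2) ^ 2 := by
  have := h.four_mul_norm_innA_sq_le hA hx
  nlinarith [sq_nonneg (opNormA' A (T * S + S * T) - 2 * wA A (T ^ 2)),
    sq_nonneg ‖innA A (T x) x‖, opNormA'_nonneg A (T * S + S * T), wA_nonneg A (T ^ 2)]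
end

theorem stmt11 (A T S : H →L[ℂ] H) (hA : StrictPos A) (hS : IsAAdjoint A T S) :
    (1/16) * opNormA' A ((T * S + S * T)^2 + (4:ℂ) • ((2:ℂ)⁻¹ • (T^2 + S^2))^2) ≤ (wA A T)^4 ∧
    (wA A T)^4 ≤ (1/8) * (opNormA' A (T * S + S * T))^2 + (1/2) * (wA A (T^2))^2 := by
  have hA0 : 0 ≤ A := (nonneg_iff_isPositive A).mpr hA.1
  refine ⟨hS.opNormA'_sq_add_four_smul_sq_le hA0, wA_pow_le four_ne_zero ?_ fun x hx =>
    hS.norm_innA_pow_four_le hA0 hx⟩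
  have := opNormA'_nonneg A (T * S + S * T)
  have := wA_nonneg A (T ^ 2)
  positivity
end
end

section
/- Let A be a strictly positive operator on H and T ∈ B_A(H) with T² = 0. Then w_A(T) = (1/2)·√‖TT^{♯A} + T^{♯A}T‖_A. -/
noncomputable section
open Complex ContinuousLinearMap

variable {H : Type*} [NormedAddCommGroup H] [InnerProductSpace ℂ H] [CompleteSpace H]

/-!
Write `S = T^{♯A}`. Since `T² = 0`, also `S² = 0`, so for `|v| = 1` the operator
`R = v T + v̄ S` is `A`-selfadjoint with `R² = TS + ST`. Choosing `v` with
`⟨R x, x⟩_A = 2 |⟨T x, x⟩_A|` gives, for `‖x‖_A = 1`,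
`4 |⟨T x, x⟩_A|² ≤ ‖R x‖_A² = ⟨R² x, x⟩_A ≤ ‖(TS + ST) x‖_A`.
Conversely, for `v = 1` the numerical radius of `R = T + S` is at most `2 w_A(T)`; for a selfadjoint
operator it dominates the norm (polarization), so `‖(TS + ST) x‖_A = ‖R² x‖_A ≤ 4 w_A(T)²`.
As `A` is strictly positive, `⟨·,·⟩_A` is an inner product on `H`, so the argument takes place in
a (not necessarily complete) inner product space, where `T` and `S` are merely linear.
-/

open scoped InnerProductSpace ComplexConjugate

-- Both sides vanish through `Real.sSup`'s junk value when the sets are unbounded or empty.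
theorem sSup_eq_half_mul_sqrt_sSup {X : Type*} {p : X → Prop} {f g : X → ℝ}
    (hf : ∀ x, 0 ≤ f x) (hfg : ∀ x, p x → (2 * f x) ^ 2 ≤ g x)
    (hgf : ∀ w, 0 ≤ w → (∀ x, p x → f x ≤ w) → ∀ x, p x → g x ≤ (2 * w) ^ 2) :
    sSup {r | ∃ x, p x ∧ r = f x} = 1 / 2 * √(sSup {r | ∃ x, p x ∧ r = g x}) := by
  set P := {r | ∃ x, p x ∧ r = f x}
  set Q := {r | ∃ x, p x ∧ r = g x}
  have hQP : ∀ M ∈ upperBounds Q, √M / 2 ∈ upperBounds P := by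
    rintro M hM _ ⟨x, hx, rfl⟩
    have := Real.le_sqrt_of_sq_le ((hfg x hx).trans (hM ⟨x, hx, rfl⟩))
    linarith
  rcases em (∃ x, p x) with ⟨x₀, hx₀⟩ | hnone
  swap
  · have hP : P = ∅ := Set.eq_empty_of_forall_notMem fun _ ⟨x, hx, _⟩ ↦ hnone ⟨x, hx⟩
    have hQ : Q = ∅ := Set.eq_empty_of_forall_notMem fun _ ⟨x, hx, _⟩ ↦ hnone ⟨x, hx⟩
    simp [hP, hQ]
  by_cases hPb : BddAbove P
  swap
  · have hQb : ¬BddAbove Q := fun ⟨M, hM⟩ ↦ hPb ⟨_, hQP M hM⟩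
    simp [Real.sSup_of_not_bddAbove hPb, Real.sSup_of_not_bddAbove hQb]
  have hPne : P.Nonempty := ⟨_, x₀, hx₀, rfl⟩
  have hw0 : 0 ≤ sSup P := (hf x₀).trans (le_csSup hPb ⟨x₀, hx₀, rfl⟩)
  have hQle : ∀ q ∈ Q, q ≤ (2 * sSup P) ^ 2 := by
    rintro _ ⟨x, hx, rfl⟩
    exact hgf _ hw0 (fun y hy ↦ le_csSup hPb ⟨y, hy, rfl⟩) x hx
  refine le_antisymm (csSup_le hPne ?_) ?_
  · intro r hr
    have := hQP (sSup Q) (fun q hq ↦ le_csSup ⟨_, hQle⟩ hq) hr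
    linarith
  · have hQne : Q.Nonempty := ⟨_, x₀, hx₀, rfl⟩
    have := Real.sqrt_le_sqrt (csSup_le hQne hQle)
    rw [Real.sqrt_sq (by positivity)] at this
    linarith

section InnerProductSpace

variable {F : Type*} [NormedAddCommGroup F] [InnerProductSpace ℂ F]

theorem Complex.re_inner_self_eq_norm_sq (x : F) : (⟪x, x⟫_ℂ).re = ‖x‖ ^ 2 := by
  simp [← Complex.ofReal_pow]

namespace LinearMap.IsSymmetric

variable {R : F →ₗ[ℂ] F}

theorem re_inner_map_add_sub (hR : R.IsSymmetric) (u v : F) :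
    (⟪R (u + v), u + v⟫_ℂ).re - (⟪R (u - v), u - v⟫_ℂ).re = 4 * (⟪R u, v⟫_ℂ).re := by
  have hvu : (⟪R v, u⟫_ℂ).re = (⟪R u, v⟫_ℂ).re := by
    rw [hR, ← inner_conj_symm, Complex.conj_re]
  simp only [map_add, map_sub, inner_add_left, inner_add_right, inner_sub_left, inner_sub_right,
    Complex.add_re, Complex.sub_re, hvu]
  ring

theorem norm_apply_le_of_abs_re_inner_le (hR : R.IsSymmetric) {a : ℝ}
    (ha : ∀ z, |(⟪R z, z⟫_ℂ).re| ≤ a * ‖z‖ ^ 2) (y : F) : ‖R y‖ ≤ a * ‖y‖ := by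
  rcases eq_or_ne y 0 with rfl | hy
  · simp
  have hy' : 0 < ‖y‖ := norm_pos_iff.mpr hy
  rcases eq_or_ne (R y) 0 with hRy | hRy
  · have ha0 : 0 ≤ a := nonneg_of_mul_nonneg_left ((abs_nonneg _).trans (ha y)) (by positivity)
    rw [hRy, norm_zero]
    positivity
  have hRy' : 0 < ‖R y‖ := norm_pos_iff.mpr hRy
  set z : F := ((‖y‖ / ‖R y‖ : ℝ) : ℂ) • R y
  have hz : ‖z‖ = ‖y‖ := by
    simp only [z, norm_smul, Complex.norm_real, Real.norm_eq_abs, abs_div, abs_norm]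
    field_simp
  have hyz : (⟪R y, z⟫_ℂ).re = ‖y‖ * ‖R y‖ := by
    rw [inner_smul_right, Complex.re_ofReal_mul, Complex.re_inner_self_eq_norm_sq]
    field_simp
  have h4 : 4 * (‖y‖ * ‖R y‖) ≤ 4 * (a * ‖y‖ ^ 2) := by
    calc 4 * (‖y‖ * ‖R y‖)
        = (⟪R (y + z), y + z⟫_ℂ).re - (⟪R (y - z), y - z⟫_ℂ).re := by
          rw [← hyz, hR.re_inner_map_add_sub]
      _ ≤ a * ‖y + z‖ ^ 2 + a * ‖y - z‖ ^ 2 := by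
        linarith [(abs_le.mp (ha (y + z))).2, (abs_le.mp (ha (y - z))).1]
      _ = 4 * (a * ‖y‖ ^ 2) := by
        rw [← mul_add, parallelogram_law_with_norm ℂ, hz]; ring
  nlinarith

theorem sq_re_inner_apply_self_le (hR : R.IsSymmetric) {x : F} (hx : ‖x‖ = 1) :
    (⟪R x, x⟫_ℂ).re ^ 2 ≤ ‖R (R x)‖ := by
  have h1 : |(⟪R x, x⟫_ℂ).re| ≤ ‖R x‖ := by
    simpa [hx] using (Complex.abs_re_le_norm _).trans (norm_inner_le_norm (𝕜 := ℂ) (R x) x)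
  have h2 : ‖R x‖ ^ 2 ≤ ‖R (R x)‖ := by
    calc ‖R x‖ ^ 2 = (⟪R (R x), x⟫_ℂ).re := by rw [hR, Complex.re_inner_self_eq_norm_sq]
      _ ≤ ‖R (R x)‖ := by
        simpa [hx] using (Complex.re_le_norm _).trans (norm_inner_le_norm (𝕜 := ℂ) (R (R x)) x)
  nlinarith [sq_abs (⟪R x, x⟫_ℂ).re, abs_nonneg (⟪R x, x⟫_ℂ).re]

end LinearMap.IsSymmetric

theorem norm_inner_apply_self_le_of_unit (T : F →ₗ[ℂ] F) {w : ℝ}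
    (hw : ∀ x : F, ‖x‖ = 1 → ‖⟪T x, x⟫_ℂ‖ ≤ w) (z : F) : ‖⟪T z, z⟫_ℂ‖ ≤ w * ‖z‖ ^ 2 := by
  rcases eq_or_ne z 0 with rfl | hz
  · simp
  have hz' : 0 < ‖z‖ := norm_pos_iff.mpr hz
  have hunit := hw (((‖z‖⁻¹ : ℝ) : ℂ) • z) (by
    rw [norm_smul, Complex.norm_real, Real.norm_eq_abs, abs_inv, abs_norm, inv_mul_cancel₀ hz'.ne'])
  rw [map_smul, inner_smul_left, inner_smul_right, Complex.conj_ofReal, norm_mul, norm_mul,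
    Complex.norm_real, Real.norm_eq_abs, abs_inv, abs_norm] at hunit
  calc ‖⟪T z, z⟫_ℂ‖ = ‖z‖⁻¹ * (‖z‖⁻¹ * ‖⟪T z, z⟫_ℂ‖) * ‖z‖ ^ 2 := by field_simp
    _ ≤ w * ‖z‖ ^ 2 := by gcongr

/-- `2 Re (v T)`, with `S` in the role of the adjoint of `T`. -/
def twiceRe (v : ℂ) (T S : F →ₗ[ℂ] F) : F →ₗ[ℂ] F := v • T + conj v • S

theorem twiceRe_apply (v : ℂ) (T S : F →ₗ[ℂ] F) (x : F) :
    twiceRe v T S x = v • T x + conj v • S x := rfl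

section AdjointPair

variable {T S : F →ₗ[ℂ] F} (hadj : ∀ x y, ⟪T x, y⟫_ℂ = ⟪x, S y⟫_ℂ)
include hadj

theorem inner_apply_eq_of_adjoint (x y : F) : ⟪S x, y⟫_ℂ = ⟪x, T y⟫_ℂ := by
  rw [← inner_conj_symm, ← hadj, inner_conj_symm]

theorem apply_apply_eq_zero_of_adjoint (hT2 : ∀ x, T (T x) = 0) (x : F) : S (S x) = 0 := by
  rw [← inner_self_eq_zero (𝕜 := ℂ), inner_apply_eq_of_adjoint hadj,
    inner_apply_eq_of_adjoint hadj, hT2, inner_zero_right]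

theorem isSymmetric_twiceRe (v : ℂ) : (twiceRe v T S).IsSymmetric := by
  intro x y
  simp only [twiceRe_apply, inner_add_left, inner_add_right, inner_smul_left, inner_smul_right,
    hadj, inner_apply_eq_of_adjoint hadj, Complex.conj_conj]
  ring

theorem re_inner_twiceRe_apply_self (v : ℂ) (x : F) :
    (⟪twiceRe v T S x, x⟫_ℂ).re = 2 * (conj v * ⟪T x, x⟫_ℂ).re := by
  rw [twiceRe_apply, inner_add_left, inner_smul_left, inner_smul_left, Complex.conj_conj,
    inner_apply_eq_of_adjoint hadj, ← inner_conj_symm x]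
  simp only [Complex.add_re, Complex.mul_re, Complex.conj_re, Complex.conj_im]
  ring

theorem twiceRe_apply_twiceRe (hT2 : ∀ x, T (T x) = 0) {v : ℂ} (hv : ‖v‖ = 1) (x : F) :
    twiceRe v T S (twiceRe v T S x) = T (S x) + S (T x) := by
  have hvv : conj v * v = 1 := by
    rw [mul_comm, Complex.mul_conj, Complex.normSq_eq_norm_sq, hv]; norm_num
  simp only [twiceRe_apply, map_add, map_smul, smul_smul, hT2,
    apply_apply_eq_zero_of_adjoint hadj hT2, smul_zero, zero_add, add_zero, hvv, mul_comm v,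
    one_smul]
  exact add_comm _ _

theorem sq_two_mul_norm_inner_apply_self_le (hT2 : ∀ x, T (T x) = 0) {x : F} (hx : ‖x‖ = 1) :
    (2 * ‖⟪T x, x⟫_ℂ‖) ^ 2 ≤ ‖T (S x) + S (T x)‖ := by
  obtain ⟨u, hu, hux⟩ := Complex.exists_norm_eq_mul_self ⟪T x, x⟫_ℂ
  have hu' : ‖conj u‖ = 1 := by rwa [Complex.norm_conj]
  calc (2 * ‖⟪T x, x⟫_ℂ‖) ^ 2 = (⟪twiceRe (conj u) T S x, x⟫_ℂ).re ^ 2 := by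
        rw [re_inner_twiceRe_apply_self hadj, Complex.conj_conj, ← hux, Complex.ofReal_re]
    _ ≤ ‖twiceRe (conj u) T S (twiceRe (conj u) T S x)‖ :=
        (isSymmetric_twiceRe hadj _).sq_re_inner_apply_self_le hx
    _ = ‖T (S x) + S (T x)‖ := by rw [twiceRe_apply_twiceRe hadj hT2 hu']

theorem norm_apply_le_of_norm_inner_apply_self_le (hT2 : ∀ x, T (T x) = 0) {w : ℝ} (hw0 : 0 ≤ w)
    (hw : ∀ z, ‖⟪T z, z⟫_ℂ‖ ≤ w * ‖z‖ ^ 2) (x : F) :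
    ‖T (S x) + S (T x)‖ ≤ (2 * w) ^ 2 * ‖x‖ := by
  set R := twiceRe 1 T S
  have hR : ∀ y, ‖R y‖ ≤ 2 * w * ‖y‖ := by
    refine (isSymmetric_twiceRe hadj 1).norm_apply_le_of_abs_re_inner_le fun z ↦ ?_
    rw [re_inner_twiceRe_apply_self hadj, map_one, one_mul, abs_mul, abs_two, mul_assoc]
    gcongr
    exact (Complex.abs_re_le_norm _).trans (hw z)
  calc ‖T (S x) + S (T x)‖ = ‖R (R x)‖ := by rw [twiceRe_apply_twiceRe hadj hT2 norm_one]
    _ ≤ 2 * w * (2 * w * ‖x‖) := (hR _).trans (by gcongr; exact hR x)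
    _ = (2 * w) ^ 2 * ‖x‖ := by ring

theorem sSup_norm_inner_apply_self_eq (hT2 : ∀ x, T (T x) = 0) :
    sSup {r | ∃ x : F, ‖x‖ = 1 ∧ r = ‖⟪T x, x⟫_ℂ‖} =
      1 / 2 * √(sSup {r | ∃ x : F, ‖x‖ = 1 ∧ r = ‖T (S x) + S (T x)‖}) :=
  sSup_eq_half_mul_sqrt_sSup (fun _ ↦ norm_nonneg _)
    (fun _ hx ↦ sq_two_mul_norm_inner_apply_self_le hadj hT2 hx)
    fun _ hw0 hw x hx ↦ by
      simpa [hx] using norm_apply_le_of_norm_inner_apply_self_le hadj hT2 hw0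
        (norm_inner_apply_self_le_of_unit T hw) x

end AdjointPair

theorem conj_innA {A : F →L[ℂ] F} (hA : (A : F →ₗ[ℂ] F).IsSymmetric) (x y : F) :
    conj (innA A x y) = innA A y x := by
  rw [innA, innA, inner_conj_symm, hA.apply_clm]

theorem innA_add_left (A : F →L[ℂ] F) (x y z : F) :
    innA A (x + y) z = innA A x z + innA A y z := by
  rw [innA, innA, innA, map_add, inner_add_left]

theorem innA_smul_left (A : F →L[ℂ] F) (x y : F) (r : ℂ) :
    innA A (r • x) y = conj r * innA A x y := by
  rw [innA, innA, map_smul, inner_smul_left]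

/-- `F` with the inner product `⟨x, y⟩_A`. -/
def WithInnerA (A : F →L[ℂ] F) (_hA : StrictPos A) : Type _ := F

namespace WithInnerA

variable {A : F →L[ℂ] F} {hA : StrictPos A}

instance : AddCommGroup (WithInnerA A hA) := inferInstanceAs (AddCommGroup F)

instance : Module ℂ (WithInnerA A hA) := inferInstanceAs (Module ℂ F)

@[reducible] def innerCore : InnerProductSpace.Core ℂ (WithInnerA A hA) where
  inner x y := innA A x y
  conj_inner_symm x y := conj_innA hA.1.isSymmetric y x
  re_inner_nonneg x := hA.1.re_inner_nonneg_left x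
  add_left := innA_add_left A
  smul_left := innA_smul_left A
  definite x hx := by
    by_contra hne
    simpa [hx] using hA.2 x hne

instance : NormedAddCommGroup (WithInnerA A hA) := innerCore.toNormedAddCommGroup

instance : InnerProductSpace ℂ (WithInnerA A hA) := InnerProductSpace.ofCore innerCore.toCore

def linearMap (T : F →L[ℂ] F) : WithInnerA A hA →ₗ[ℂ] WithInnerA A hA where
  toFun := T
  map_add' := T.map_add
  map_smul' := T.map_smul

end WithInnerA

end InnerProductSpace

theorem IsAAdjoint.innA_apply_left_s14 {A T S : H →L[ℂ] H} (hA : (A : H →ₗ[ℂ] H).IsSymmetric)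
    (hS : IsAAdjoint A T S) (x y : H) : innA A (T x) y = innA A x (S y) := by
  calc innA A (T x) y = ⟪x, adjoint T (A y)⟫_ℂ := by
        rw [innA, hA.apply_clm, adjoint_inner_right]
    _ = innA A x (S y) := by rw [← comp_apply, ← hS, comp_apply, innA, hA.apply_clm]

theorem stmt14 (A T S : H →L[ℂ] H) (hA : StrictPos A) (hS : IsAAdjoint A T S)
    (hT2 : T^2 = 0) :
    wA A T = (1/2) * Real.sqrt (opNormA' A (T * S + S * T)) := by
  have hT2' (x : H) : T (T x) = 0 := by simpa [sq] using DFunLike.congr_fun hT2 x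
  have hadj : ∀ x y : WithInnerA A hA,
      ⟪WithInnerA.linearMap T x, y⟫_ℂ = ⟪x, WithInnerA.linearMap S y⟫_ℂ :=
    -- with `H` left implicit, unification would instantiate it as `WithInnerA A hA`
    hS.innA_apply_left_s14 (H := H) hA.1.isSymmetric
  exact sSup_norm_inner_apply_self_eq hadj hT2'
end
end
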